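/- For r ≥ 3, the graph obtained from the complete bipartite graph K_{r,r} by deleting a perfect matching and then adding back one matching edge has monophonic position number 2; consequently mex(2r;2) ≥ r² − r + 1. -/

import Mathlib

/-!
Any three vertices lie on a common induced path, hence `mp = 2`. Write `a'` for the copy of the
index `a` on the other side: the only non-adjacent pairs across the sides are the deleted matching
edges `a a'` with `a ≠ 0`. For `a, b` on one side and `c'` on the other, `a – c' – b` is induced
unless `c'` is a non-neighbour of `a` (say), and then `a – x' – b – a'` with `x ∉ {a, b}` is; this
is where `r ≥ 3` enters. Three vertices on one side lie on `a – c' – b – a' – c`, with the ends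
chosen among the indices `≠ 0`. The graph has `r² − r + 1` edges, and relabelling its vertices by
`Fin (2r)` gives the bound on `mex(2r; 2)`.
-/

open SimpleGraph

/-- A walk is an *induced (monophonic) path* if it is a path and vertices on the
walk are adjacent in `G` exactly when they are consecutive on the walk. -/
def IsInducedPathW {V : Type*} (G : SimpleGraph V) {u v : V} (p : G.Walk u v) : Prop :=
  p.IsPath ∧ ∀ a b : V, a ∈ p.support → b ∈ p.support → (G.Adj a b ↔ p.toSubgraph.Adj a b)

/-- A walk is a *geodesic* if it is a shortest path between its endpoints. -/
def IsGeodesicW {V : Type*} (G : SimpleGraph V) {u v : V} (p : G.Walk u v) : Prop :=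
  p.IsPath ∧ p.length = G.dist u v

/-- A set of vertices is in *monophonic position* if no induced path of `G`
contains more than two of its vertices. -/
def IsMpSet {V : Type*} (G : SimpleGraph V) (S : Set V) : Prop :=
  ∀ ⦃u v : V⦄ (p : G.Walk u v), IsInducedPathW G p → (S ∩ {x | x ∈ p.support}).ncard ≤ 2

/-- A set of vertices is in *general position* if no geodesic of `G` contains
more than two of its vertices. -/
def IsGpSet {V : Type*} (G : SimpleGraph V) (S : Set V) : Prop :=
  ∀ ⦃u v : V⦄ (p : G.Walk u v), IsGeodesicW G p → (S ∩ {x | x ∈ p.support}).ncard ≤ 2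

/-- The monophonic position number `mp(G)`. -/
noncomputable def mpNum {V : Type*} (G : SimpleGraph V) : ℕ :=
  sSup {n | ∃ S : Set V, IsMpSet G S ∧ S.ncard = n}

/-- The general position number `gp(G)`. -/
noncomputable def gpNum {V : Type*} (G : SimpleGraph V) : ℕ :=
  sSup {n | ∃ S : Set V, IsGpSet G S ∧ S.ncard = n}

/-- `mex n a`: the largest number of edges of a graph of order `n` with
monophonic position number `a`. -/
noncomputable def mexNum (n a : ℕ) : ℕ :=
  sSup {m | ∃ G : SimpleGraph (Fin n), mpNum G = a ∧ G.edgeSet.ncard = m}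

/-- The complete bipartite graph `K_{r,r}` minus a perfect matching, with one
matching edge added back. -/
def nearMatchingFreeGraph (r : ℕ) : SimpleGraph (Fin r ⊕ Fin r) :=
  SimpleGraph.fromRel fun u v =>
    match u, v with
    | .inl i, .inr j => i ≠ j ∨ ((i : ℕ) = 0 ∧ (j : ℕ) = 0)
    | _, _ => False

namespace SimpleGraph.Walk

variable {V W : Type*} {G : SimpleGraph V} {G' : SimpleGraph W} {u v w : V}

theorem IsChordless.cons {p : G.Walk v w} (hp : p.IsChordless) (h : G.Adj u v)
    (hnb : ∀ x ∈ p.support, G.Adj u x → x = v) : (cons h p).IsChordless := by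
  rw [isChordless_iff_forall_mem_edges] at hp ⊢
  intro a b ha hb hab
  rw [support_cons, List.mem_cons] at ha hb
  rw [edges_cons, List.mem_cons]
  rcases ha with rfl | ha <;> rcases hb with rfl | hb
  · exact absurd rfl hab.ne
  · exact .inl (by rw [hnb b hb hab])
  · exact .inl (by rw [hnb a ha hab.symm, Sym2.eq_swap])
  · exact .inr (hp ha hb hab)

theorem IsChordless.map {p : G.Walk u v} (hp : p.IsChordless) (f : G ↪g G') :
    (p.map f.toHom).IsChordless := by
  rw [isChordless_iff_forall_mem_edges] at hp ⊢
  simp only [support_map, edges_map, List.mem_map]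
  rintro _ _ ⟨a, ha, rfl⟩ ⟨b, hb, rfl⟩ hab
  exact ⟨s(a, b), hp ha hb (f.map_adj_iff.1 hab), rfl⟩

end SimpleGraph.Walk

section InducedPath

variable {V W : Type*} {G : SimpleGraph V} {G' : SimpleGraph W} {u v w : V}

theorem isInducedPathW_iff_isPath_and_isChordless (p : G.Walk u v) :
    IsInducedPathW G p ↔ p.IsPath ∧ p.IsChordless := by
  simp only [IsInducedPathW, Walk.isChordless_iff_forall_mem_edges,
    Walk.adj_toSubgraph_iff_mem_edges]
  exact and_congr_right fun _ =>
    ⟨fun h a b ha hb hab => (h a b ha hb).1 hab,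
      fun h a b ha hb => ⟨fun hab => h ha hb hab, p.adj_of_mem_edges⟩⟩

theorem isInducedPathW_nil (u : V) : IsInducedPathW G (Walk.nil : G.Walk u u) :=
  (isInducedPathW_iff_isPath_and_isChordless _).2
    ⟨.nil, by simp [Walk.isChordless_iff_forall_mem_edges]⟩

theorem IsInducedPathW.cons {p : G.Walk v w} (hp : IsInducedPathW G p) (h : G.Adj u v)
    (hu : u ∉ p.support) (hnb : ∀ x ∈ p.support, G.Adj u x → x = v) :
    IsInducedPathW G (Walk.cons h p) := by
  rw [isInducedPathW_iff_isPath_and_isChordless] at hp ⊢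
  exact ⟨(Walk.cons_isPath_iff h p).2 ⟨hp.1, hu⟩, hp.2.cons h hnb⟩

theorem IsInducedPathW.map {p : G.Walk u v} (hp : IsInducedPathW G p) (f : G ↪g G') :
    IsInducedPathW G' (p.map f.toHom) := by
  rw [isInducedPathW_iff_isPath_and_isChordless] at hp ⊢
  exact ⟨hp.1.map f.injective, hp.2.map f⟩

def OnInducedPath (G : SimpleGraph V) (s : Set V) : Prop :=
  ∃ (u v : V) (p : G.Walk u v), IsInducedPathW G p ∧ s ⊆ {x | x ∈ p.support}

theorem OnInducedPath.mono {s t : Set V} (h : OnInducedPath G s) (hts : t ⊆ s) :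
    OnInducedPath G t :=
  let ⟨u, v, p, hp, hs⟩ := h
  ⟨u, v, p, hp, hts.trans hs⟩

theorem OnInducedPath.image {s : Set V} (h : OnInducedPath G s) (f : G ↪g G') :
    OnInducedPath G' (f '' s) := by
  obtain ⟨u, v, p, hp, hs⟩ := h
  refine ⟨_, _, p.map f.toHom, hp.map f, ?_⟩
  rintro _ ⟨x, hx, rfl⟩
  simpa [Walk.support_map] using hs hx

end InducedPath

section MonophonicPosition

variable {V W : Type*} {G : SimpleGraph V} {G' : SimpleGraph W}

theorem IsMpSet.of_image {S : Set V} (f : G ↪g G') (h : IsMpSet G' (f '' S)) :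
    IsMpSet G S := by
  intro u v p hp
  have hmap := h (p.map f.toHom) (hp.map f)
  rwa [show {x | x ∈ (p.map f.toHom).support} = f '' {x | x ∈ p.support} by
      ext; simp [Walk.support_map], ← Set.image_inter f.injective,
    Set.ncard_image_of_injective _ f.injective] at hmap

theorem IsMpSet.image {S : Set V} (f : G ≃g G') (h : IsMpSet G S) : IsMpSet G' (f '' S) :=
  .of_image f.symm.toEmbedding (by simpa [Set.image_image] using h)

theorem SimpleGraph.Iso.mpNum_eq (f : G ≃g G') : mpNum G = mpNum G' := by
  unfold mpNum
  congr 1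
  ext n
  constructor
  · rintro ⟨S, hS, rfl⟩
    exact ⟨f '' S, hS.image f, Set.ncard_image_of_injective _ f.injective⟩
  · rintro ⟨S, hS, rfl⟩
    exact ⟨f.symm '' S, hS.image f.symm, Set.ncard_image_of_injective _ f.symm.injective⟩

theorem isMpSet_pair (x y : V) : IsMpSet G {x, y} := fun _ _ _ _ =>
  (Set.ncard_le_ncard Set.inter_subset_left (Set.toFinite _)).trans
    ((Set.ncard_insert_le _ _).trans (by simp))

theorem IsMpSet.ncard_le_two {S : Set V} (hS : IsMpSet G S)
    (h : ∀ x y z, x ≠ y → x ≠ z → y ≠ z → OnInducedPath G {x, y, z}) : S.ncard ≤ 2 := by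
  by_contra! hlt
  have hfin : S.Finite := Set.finite_of_ncard_pos (by omega)
  obtain ⟨x, hx, y, hy, z, hz, hxy, hxz, hyz⟩ := (Set.two_lt_ncard hfin).1 hlt
  obtain ⟨u, v, p, hp, hsub⟩ := h x y z hxy hxz hyz
  have h3 : ({x, y, z} : Set V).ncard ≤ (S ∩ {w | w ∈ p.support}).ncard :=
    Set.ncard_le_ncard (Set.subset_inter (by simp [Set.insert_subset_iff, hx, hy, hz]) hsub)
      (hfin.inter_of_left _)
  rw [Set.ncard_eq_three.2 ⟨x, y, z, hxy, hxz, hyz, rfl⟩] at h3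
  have := hS p hp
  omega

theorem mpNum_eq_two_of_onInducedPath {x y : V} (hxy : x ≠ y)
    (h : ∀ x y z, x ≠ y → x ≠ z → y ≠ z → OnInducedPath G {x, y, z}) : mpNum G = 2 :=
  IsGreatest.csSup_eq
    ⟨⟨{x, y}, isMpSet_pair x y, Set.ncard_pair hxy⟩,
      fun _ ⟨_, hS, hn⟩ => hn ▸ hS.ncard_le_two h⟩

theorem ncard_edgeSet_le_mexNum {n : ℕ} (G : SimpleGraph V) (e : V ≃ Fin n) :
    G.edgeSet.ncard ≤ mexNum n (mpNum G) := by
  let f : G ≃g G.map e.toEmbedding := Iso.map e G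
  refine le_csSup ⟨Nat.card (Sym2 (Fin n)), ?_⟩ ⟨G.map e.toEmbedding, f.mpNum_eq.symm, ?_⟩
  · rintro _ ⟨H, -, rfl⟩
    exact Set.ncard_le_card _
  · rw [← Nat.card_coe_set_eq, ← Nat.card_coe_set_eq]
    exact Nat.card_congr f.mapEdgeSet.symm

end MonophonicPosition

namespace nearMatchingFreeGraph

variable {r : ℕ} {a b c : Fin r}

@[simp]
theorem adj_inl_inr : (nearMatchingFreeGraph r).Adj (.inl a) (.inr b) ↔
    a ≠ b ∨ (a : ℕ) = 0 ∧ (b : ℕ) = 0 := by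
  simp [nearMatchingFreeGraph]

@[simp]
theorem adj_inr_inl : (nearMatchingFreeGraph r).Adj (.inr b) (.inl a) ↔
    a ≠ b ∨ (a : ℕ) = 0 ∧ (b : ℕ) = 0 := by
  rw [adj_comm, adj_inl_inr]

@[simp]
theorem not_adj_inl_inl : ¬ (nearMatchingFreeGraph r).Adj (.inl a) (.inl b) := by
  simp [nearMatchingFreeGraph]

@[simp]
theorem not_adj_inr_inr : ¬ (nearMatchingFreeGraph r).Adj (.inr a) (.inr b) := by
  simp [nearMatchingFreeGraph]

def swapIso (r : ℕ) : nearMatchingFreeGraph r ≃g nearMatchingFreeGraph r :=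
  ⟨Equiv.sumComm _ _, by rintro (i | i) (j | j) <;> simp [ne_comm, and_comm]⟩

theorem onInducedPath_of_not_adj (hr : 3 ≤ r) (hab : a ≠ b)
    (hac : ¬ (nearMatchingFreeGraph r).Adj (.inl a) (.inr c)) :
    OnInducedPath (nearMatchingFreeGraph r) {.inl a, .inl b, .inr c} := by
  obtain rfl : a = c := by_contra fun h => hac (by simp [h])
  have ha : (a : ℕ) ≠ 0 := fun h => hac (by simp [h])
  obtain ⟨x, hxa, hxb⟩ := Fin.exists_ne_and_ne_of_two_lt a b hr
  have h₁ : (nearMatchingFreeGraph r).Adj (.inl a) (.inr x) := by simp [hxa.symm]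
  have h₂ : (nearMatchingFreeGraph r).Adj (.inr x) (.inl b) := by simp [hxb.symm]
  have h₃ : (nearMatchingFreeGraph r).Adj (.inl b) (.inr a) := by simp [hab.symm]
  refine ⟨_, _, .cons h₁ (.cons h₂ (.cons h₃ .nil)), ?_, by simp [Set.insert_subset_iff]⟩
  refine (((isInducedPathW_nil _).cons _ ?_ ?_).cons _ ?_ ?_).cons _ ?_ ?_ <;>
    simp [ha, hab, hxa]

theorem onInducedPath_inl_inl_inr (hr : 3 ≤ r) (hab : a ≠ b) (c : Fin r) :
    OnInducedPath (nearMatchingFreeGraph r) {.inl a, .inl b, .inr c} := by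
  by_cases hac : (nearMatchingFreeGraph r).Adj (.inl a) (.inr c)
  · by_cases hbc : (nearMatchingFreeGraph r).Adj (.inl b) (.inr c)
    · refine ⟨_, _, .cons hac (.cons hbc.symm .nil), ?_, by simp [Set.insert_subset_iff]⟩
      refine ((isInducedPathW_nil _).cons _ ?_ ?_).cons _ ?_ ?_ <;> simp [hab]
    · exact (onInducedPath_of_not_adj hr hab.symm hbc).mono (by simp [Set.insert_subset_iff])
  · exact onInducedPath_of_not_adj hr hab hac

theorem onInducedPath_inl_inl_inl_of_ne_zero (hab : a ≠ b) (hac : a ≠ c) (hbc : b ≠ c)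
    (ha : (a : ℕ) ≠ 0) (hc : (c : ℕ) ≠ 0) :
    OnInducedPath (nearMatchingFreeGraph r) {.inl a, .inl b, .inl c} := by
  have h₁ : (nearMatchingFreeGraph r).Adj (.inl a) (.inr c) := by simp [hac]
  have h₂ : (nearMatchingFreeGraph r).Adj (.inr c) (.inl b) := by simp [hbc]
  have h₃ : (nearMatchingFreeGraph r).Adj (.inl b) (.inr a) := by simp [hab.symm]
  have h₄ : (nearMatchingFreeGraph r).Adj (.inr a) (.inl c) := by simp [hac.symm]
  refine ⟨_, _, .cons h₁ (.cons h₂ (.cons h₃ (.cons h₄ .nil))), ?_,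
    by simp [Set.insert_subset_iff]⟩
  refine ((((isInducedPathW_nil _).cons _ ?_ ?_).cons _ ?_ ?_).cons _ ?_ ?_).cons _ ?_ ?_ <;>
    simp [ha, hc, hab, hac, hbc, hac.symm]

theorem onInducedPath_inl_inl_inl (hab : a ≠ b) (hac : a ≠ c) (hbc : b ≠ c) :
    OnInducedPath (nearMatchingFreeGraph r) {.inl a, .inl b, .inl c} := by
  have hne : ∀ {x y : Fin r}, x ≠ y → (x : ℕ) = 0 → (y : ℕ) ≠ 0 := fun hxy hx hy =>
    hxy (Fin.ext (hx.trans hy.symm))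
  by_cases ha : (a : ℕ) = 0
  · exact (onInducedPath_inl_inl_inl_of_ne_zero hab.symm hbc hac (hne hab ha) (hne hac ha)).mono
      (by simp [Set.insert_subset_iff])
  by_cases hc : (c : ℕ) = 0
  · exact (onInducedPath_inl_inl_inl_of_ne_zero hac hab hbc.symm ha (hne hbc.symm hc)).mono
      (by simp [Set.insert_subset_iff])
  exact onInducedPath_inl_inl_inl_of_ne_zero hab hac hbc ha hc

theorem onInducedPath_inl_inl (hr : 3 ≤ r) (hab : a ≠ b) {w : Fin r ⊕ Fin r}
    (hwa : w ≠ .inl a) (hwb : w ≠ .inl b) :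
    OnInducedPath (nearMatchingFreeGraph r) {.inl a, .inl b, w} := by
  rcases w with c | c
  · exact onInducedPath_inl_inl_inl hab (by rintro rfl; exact hwa rfl)
      (by rintro rfl; exact hwb rfl)
  · exact onInducedPath_inl_inl_inr hr hab c

theorem onInducedPath_inr_inr (hr : 3 ≤ r) (hab : a ≠ b) {w : Fin r ⊕ Fin r}
    (hwa : w ≠ .inr a) (hwb : w ≠ .inr b) :
    OnInducedPath (nearMatchingFreeGraph r) {.inr a, .inr b, w} := by
  have := (onInducedPath_inl_inl hr hab (w := w.swap)
    (Sum.swap_leftInverse.injective.ne hwa) (Sum.swap_leftInverse.injective.ne hwb)).image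
    (swapIso r).toEmbedding
  simpa [swapIso, Set.image_insert_eq] using this

theorem onInducedPath_triple (hr : 3 ≤ r) {x y z : Fin r ⊕ Fin r} (hxy : x ≠ y) (hxz : x ≠ z)
    (hyz : y ≠ z) : OnInducedPath (nearMatchingFreeGraph r) {x, y, z} := by
  rcases x with a | a <;> rcases y with b | b
  · exact onInducedPath_inl_inl hr (by simpa using hxy) hxz.symm hyz.symm
  · rcases z with c | c
    · exact (onInducedPath_inl_inl hr (by simpa using hxz) (w := .inr b) (by simp) (by simp)).mono
        (by simp [Set.insert_subset_iff])
    · exact (onInducedPath_inr_inr hr (by simpa using hyz) (w := .inl a) (by simp) (by simp)).mono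
        (by simp [Set.insert_subset_iff])
  · rcases z with c | c
    · exact (onInducedPath_inl_inl hr (by simpa using hyz) (w := .inr a) (by simp) (by simp)).mono
        (by simp [Set.insert_subset_iff])
    · exact (onInducedPath_inr_inr hr (by simpa using hxz) (w := .inl b) (by simp) (by simp)).mono
        (by simp [Set.insert_subset_iff])
  · exact onInducedPath_inr_inr hr (by simpa using hxy) hxz.symm hyz.symm

theorem mpNum_eq (hr : 3 ≤ r) : mpNum (nearMatchingFreeGraph r) = 2 :=
  mpNum_eq_two_of_onInducedPath (x := .inl ⟨0, by omega⟩) (y := .inr ⟨0, by omega⟩) (by simp)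
    fun _ _ _ => onInducedPath_triple hr

theorem le_ncard_edgeSet (hr : 0 < r) :
    r ^ 2 - r + 1 ≤ (nearMatchingFreeGraph r).edgeSet.ncard := by
  classical
  let zero : Fin r := ⟨0, hr⟩
  let cross : Fin r × Fin r ↪ Sym2 (Fin r ⊕ Fin r) :=
    ⟨fun p => s(.inl p.1, .inr p.2), by rintro ⟨a, b⟩ ⟨c, d⟩ h; simpa using h⟩
  have hsub : (((insert (zero, zero) Finset.univ.offDiag).map cross : Finset _) : Set _) ⊆
      (nearMatchingFreeGraph r).edgeSet := by
    rw [Finset.coe_map]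
    rintro _ ⟨⟨i, j⟩, hij, rfl⟩
    simp only [Finset.coe_insert, Set.mem_insert_iff, Prod.mk.injEq, Finset.coe_offDiag,
      Finset.coe_univ, Set.mem_offDiag, Set.mem_univ, true_and] at hij
    change (nearMatchingFreeGraph r).Adj (.inl i) (.inr j)
    rw [adj_inl_inr]
    rcases hij with ⟨rfl, rfl⟩ | hij
    exacts [.inr ⟨rfl, rfl⟩, .inl hij]
  calc r ^ 2 - r + 1 = (insert (zero, zero) Finset.univ.offDiag).card := by
        rw [Finset.card_insert_of_notMem (by simp), Finset.offDiag_card, Finset.card_univ,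
          Fintype.card_fin, sq]
    _ = ((insert (zero, zero) Finset.univ.offDiag).map cross : Set _).ncard := by
        rw [Set.ncard_coe_finset, Finset.card_map]
    _ ≤ _ := Set.ncard_le_ncard hsub

end nearMatchingFreeGraph

theorem nearMatchingFree_mpNum (r : ℕ) (hr : 3 ≤ r) :
    mpNum (nearMatchingFreeGraph r) = 2 ∧ r ^ 2 - r + 1 ≤ mexNum (2 * r) 2 := by
  have hmp := nearMatchingFreeGraph.mpNum_eq hr
  refine ⟨hmp, ?_⟩
  calc r ^ 2 - r + 1 ≤ (nearMatchingFreeGraph r).edgeSet.ncard :=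
        nearMatchingFreeGraph.le_ncard_edgeSet (by omega)
    _ ≤ mexNum (2 * r) (mpNum (nearMatchingFreeGraph r)) :=
        ncard_edgeSet_le_mexNum _ (finSumFinEquiv.trans (finCongr (two_mul r).symm))
    _ = mexNum (2 * r) 2 := by rw [hmp]
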